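/- arXiv:2106.14437 — 9 statements merged into one kernel-verified Lean document; each statement's English description precedes it below -/
import Mathlib

section
/- For a symmetric nonnegative matrix A and any positive integer m, st₊(Aᵐ) ≤ st₊(A). -/
open Matrix

noncomputable def sntRank {m : Type*} [Fintype m] (A : Matrix m m ℝ) : ℕ :=
  sInf {k : ℕ | ∃ B : Matrix m (Fin k) ℝ, ∃ C : Matrix (Fin k) (Fin k) ℝ,
    (∀ i j, 0 ≤ B i j) ∧ (∀ i j, 0 ≤ C i j) ∧ C.IsSymm ∧ A = B * C * Bᵀ}

private lemma mul_nonneg_entries {p q r : Type*} [Fintype q]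
    (X : Matrix p q ℝ) (Y : Matrix q r ℝ)
    (hX : ∀ i j, 0 ≤ X i j) (hY : ∀ i j, 0 ≤ Y i j) :
    ∀ i j, 0 ≤ (X * Y) i j := by
  intro i j
  rw [Matrix.mul_apply]
  exact Finset.sum_nonneg fun t _ => mul_nonneg (hX i t) (hY t j)

private lemma pow_mul_comm_sym {k : ℕ} (C M : Matrix (Fin k) (Fin k) ℝ)
    (t : ℕ) : C * (M * C) ^ t = (C * M) ^ t * C := by
  induction t with
  | zero => simp
  | succ t ih =>
    rw [pow_succ, ← mul_assoc, ih, pow_succ]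
    simp only [mul_assoc]

theorem stmt_6 {n : ℕ} (A : Matrix (Fin n) (Fin n) ℝ)
    (hA : A.IsSymm) (hApos : ∀ i j, 0 ≤ A i j)
    (m : ℕ) (hm : 1 ≤ m) :
    sntRank (A ^ m) ≤ sntRank A := by
  classical
  set S : Set ℕ := {k : ℕ | ∃ B : Matrix (Fin n) (Fin k) ℝ,
    ∃ C : Matrix (Fin k) (Fin k) ℝ,
    (∀ i j, 0 ≤ B i j) ∧ (∀ i j, 0 ≤ C i j) ∧ C.IsSymm ∧ A = B * C * Bᵀ} with hS
  have hne : S.Nonempty := by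
    refine ⟨n, 1, A, ?_, hApos, hA, by simp⟩
    intro i j
    by_cases h : i = j <;> simp [Matrix.one_apply, h]
  set k := sntRank A with hk
  have hmem : k ∈ S := Nat.sInf_mem hne
  obtain ⟨B, C, hB, hC, hCs, hAeq⟩ := hmem
  set M : Matrix (Fin k) (Fin k) ℝ := Bᵀ * B with hM
  have hMpos : ∀ i j, 0 ≤ M i j :=
    mul_nonneg_entries _ _ (fun i j => by simpa using hB j i) hB
  set D : Matrix (Fin k) (Fin k) ℝ := (C * M) ^ (m - 1) * C with hD
  have hDpos : ∀ i j, 0 ≤ D i j := by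
    have : ∀ t : ℕ, ∀ i j, 0 ≤ ((C * M) ^ t) i j := by
      intro t
      induction t with
      | zero =>
        intro i j
        by_cases h : i = j <;> simp [Matrix.one_apply, h]
      | succ t ih =>
        rw [pow_succ]
        exact mul_nonneg_entries _ _ ih (mul_nonneg_entries _ _ hC hMpos)
    exact mul_nonneg_entries _ _ (this (m - 1)) hC
  have hDsym : D.IsSymm := by
    rw [Matrix.IsSymm, hD, Matrix.transpose_mul, Matrix.transpose_pow,
      Matrix.transpose_mul, hM, Matrix.transpose_mul, Matrix.transpose_transpose,
      hCs]
    exact pow_mul_comm_sym C (Bᵀ * B) (m - 1)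
  have hpow : ∀ t : ℕ, A ^ (t + 1) = B * ((C * M) ^ t * C) * Bᵀ := by
    intro t
    induction t with
    | zero => simpa using hAeq
    | succ t ih =>
      have : A ^ (t + 1 + 1) = A ^ (t + 1) * A := pow_succ A (t + 1)
      rw [this, ih, hAeq, pow_succ]
      simp only [hM, Matrix.mul_assoc]
  have hkey : A ^ m = B * D * Bᵀ := by
    have := hpow (m - 1)
    rwa [Nat.sub_add_cancel hm] at this
  exact Nat.sInf_le ⟨B, D, hB, hDpos, hDsym, hkey⟩
end

section
/- For symmetric nonnegative matrices A' (n×n) and A'' (m×m), st₊(A' ⊕ A'') = st₊(A') + st₊(A''), where A' ⊕ A'' is the block diagonal direct sum. -/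
open Matrix

/-!
Gluing optimal factorizations of the two blocks block-diagonally gives `≤`. Conversely, in a
nonnegative factorization `B * C * Bᵀ` of `A' ⊕ A''` there is no cancellation, so the vanishing
off-diagonal blocks force every summand `B x p * C p q * B y q` with `x`, `y` in different blocks
to vanish. Hence the inner indices contributing to the `A'`-block and those contributing to the
`A''`-block are disjoint, and restricting the factorization to each of these index sets factors
the corresponding block.
-/

section

variable {μ ν ι κ : Type*} [Fintype ι]

theorem Matrix.mul_mul_transpose_apply {R : Type*} [NonUnitalNonAssocSemiring R]
    (B : Matrix μ ι R) (C : Matrix ι ι R) (x y : μ) :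
    (B * C * Bᵀ) x y = ∑ p, ∑ q, B x p * C p q * B y q := by
  simp only [mul_apply, transpose_apply, Finset.sum_mul]
  exact Finset.sum_comm

theorem Matrix.submatrix_mul_mul_transpose_of_support_subset {R : Type*}
    [NonUnitalNonAssocSemiring R] (B : Matrix μ ι R) (C : Matrix ι ι R) (f : ν → μ)
    (S : Finset ι) (hS : ∀ i i' p q, B (f i) p * C p q * B (f i') q ≠ 0 → p ∈ S ∧ q ∈ S) :
    (B * C * Bᵀ).submatrix f f = B.submatrix f ((↑) : S → ι) *
      C.submatrix ((↑) : S → ι) ((↑) : S → ι) * (B.submatrix f ((↑) : S → ι))ᵀ := by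
  ext i i'
  rw [submatrix_apply, mul_mul_transpose_apply, mul_mul_transpose_apply]
  set g : ι → ι → R := fun p q => B (f i) p * C p q * B (f i') q
  change ∑ p, ∑ q, g p q = ∑ p : S, ∑ q : S, g ↑p ↑q
  rw [Finset.sum_coe_sort S (fun p => ∑ q : S, g p q)]
  simp only [Finset.sum_coe_sort S, ← Finset.sum_product']
  refine (Finset.sum_subset (Finset.subset_univ _) fun pq _ hpq => ?_).symm
  by_contra h
  exact hpq (Finset.mem_product.mpr (hS i i' pq.1 pq.2 h))

structure IsSNTFactorization (A : Matrix μ μ ℝ) (B : Matrix μ ι ℝ) (C : Matrix ι ι ℝ) : Prop where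
  nonneg_left : ∀ i p, 0 ≤ B i p
  nonneg_middle : ∀ p q, 0 ≤ C p q
  isSymm : C.IsSymm
  eq : A = B * C * Bᵀ

namespace IsSNTFactorization

variable {A : Matrix μ μ ℝ} {B : Matrix μ ι ℝ} {C : Matrix ι ι ℝ}

theorem one_of_isSymm [Fintype μ] [DecidableEq μ] (hA : A.IsSymm) (hA_nonneg : ∀ i j, 0 ≤ A i j) :
    IsSNTFactorization A 1 A where
  nonneg_left i p := by
    rw [one_apply]
    split_ifs <;> norm_num
  nonneg_middle := hA_nonneg
  isSymm := hA
  eq := by rw [Matrix.one_mul, transpose_one, Matrix.mul_one]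

theorem reindex [Fintype κ] (h : IsSNTFactorization A B C) (e : ι ≃ κ) :
    IsSNTFactorization A (B.submatrix id e.symm) (C.submatrix e.symm e.symm) where
  nonneg_left _ _ := h.nonneg_left _ _
  nonneg_middle _ _ := h.nonneg_middle _ _
  isSymm := h.isSymm.submatrix e.symm
  eq := by
    rw [transpose_submatrix, submatrix_mul_equiv B C id e.symm e.symm,
      submatrix_mul_equiv (B * C) Bᵀ id e.symm id]
    exact h.eq

theorem fromBlocks {n m ι' ι'' : Type*} {A' : Matrix n n ℝ} {A'' : Matrix m m ℝ}
    {B' : Matrix n ι' ℝ} {B'' : Matrix m ι'' ℝ} {C' : Matrix ι' ι' ℝ} {C'' : Matrix ι'' ι'' ℝ}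
    [Fintype ι'] [Fintype ι''] (h' : IsSNTFactorization A' B' C')
    (h'' : IsSNTFactorization A'' B'' C'') :
    IsSNTFactorization (fromBlocks A' 0 0 A'') (fromBlocks B' 0 0 B'')
      (fromBlocks C' 0 0 C'') where
  nonneg_left := by
    rintro (i | i) (p | p) <;> simp [h'.nonneg_left, h''.nonneg_left]
  nonneg_middle := by
    rintro (p | p) (q | q) <;> simp [h'.nonneg_middle, h''.nonneg_middle]
  isSymm := h'.isSymm.fromBlocks transpose_zero h''.isSymm
  eq := by
    rw [fromBlocks_transpose, fromBlocks_multiply, fromBlocks_multiply, h'.eq, h''.eq]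
    simp

end IsSNTFactorization

end

section sntRank

variable {μ ι : Type*} [Fintype μ] [Fintype ι] {A : Matrix μ μ ℝ}

theorem sntRank_eq_sInf :
    sntRank A = sInf {k : ℕ | ∃ (B : Matrix μ (Fin k) ℝ) (C : Matrix (Fin k) (Fin k) ℝ),
      IsSNTFactorization A B C} := by
  refine congrArg sInf (Set.ext fun k => exists₂_congr fun B C => ?_)
  exact ⟨fun ⟨hB, hC, hCs, hA⟩ => ⟨hB, hC, hCs, hA⟩, fun ⟨hB, hC, hCs, hA⟩ => ⟨hB, hC, hCs, hA⟩⟩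

theorem IsSNTFactorization.sntRank_le_card {B : Matrix μ ι ℝ} {C : Matrix ι ι ℝ}
    (h : IsSNTFactorization A B C) : sntRank A ≤ Fintype.card ι := by
  rw [sntRank_eq_sInf]
  exact Nat.sInf_le ⟨_, _, h.reindex (Fintype.equivFin ι)⟩

theorem exists_isSNTFactorization_sntRank [DecidableEq μ] (hA : A.IsSymm)
    (hA_nonneg : ∀ i j, 0 ≤ A i j) :
    ∃ (B : Matrix μ (Fin (sntRank A)) ℝ) (C : Matrix (Fin (sntRank A)) (Fin (sntRank A)) ℝ),
      IsSNTFactorization A B C := by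
  rw [sntRank_eq_sInf]
  exact Nat.sInf_mem (s := {k | ∃ (B : Matrix μ (Fin k) ℝ) (C : Matrix (Fin k) (Fin k) ℝ),
    IsSNTFactorization A B C})
    ⟨_, _, _, (IsSNTFactorization.one_of_isSymm hA hA_nonneg).reindex (Fintype.equivFin μ)⟩

end sntRank

section factorSupport

variable {μ ν ν' ι : Type*} [Fintype ι] {A : Matrix μ μ ℝ} {B : Matrix μ ι ℝ} {C : Matrix ι ι ℝ}

open Classical in
noncomputable def factorSupport (B : Matrix μ ι ℝ) (C : Matrix ι ι ℝ) (f : ν → μ) : Finset ι :=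
  {p | ∃ i i' q, B (f i) p * C p q * B (f i') q ≠ 0}

theorem mem_factorSupport {f : ν → μ} {p : ι} :
    p ∈ factorSupport B C f ↔ ∃ i i' q, B (f i) p * C p q * B (f i') q ≠ 0 := by
  simp [factorSupport]

namespace IsSNTFactorization

theorem mul_mul_eq_zero_of_apply_eq_zero (h : IsSNTFactorization A B C) {x y : μ}
    (hxy : A x y = 0) (p q : ι) : B x p * C p q * B y q = 0 := by
  have hterm : ∀ pq : ι × ι, 0 ≤ B x pq.1 * C pq.1 pq.2 * B y pq.2 := fun pq =>
    mul_nonneg (mul_nonneg (h.nonneg_left _ _) (h.nonneg_middle _ _)) (h.nonneg_left _ _)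
  rw [h.eq, mul_mul_transpose_apply, ← Finset.sum_product'] at hxy
  exact (Finset.sum_eq_zero_iff_of_nonneg fun pq _ => hterm pq).1 hxy (p, q) (Finset.mem_univ _)

theorem submatrix_factorSupport (h : IsSNTFactorization A B C) (f : ν → μ) :
    IsSNTFactorization (A.submatrix f f) (B.submatrix f ((↑) : factorSupport B C f → ι))
      (C.submatrix ((↑) : factorSupport B C f → ι) (↑)) where
  nonneg_left _ _ := h.nonneg_left _ _
  nonneg_middle _ _ := h.nonneg_middle _ _
  isSymm := h.isSymm.submatrix _
  eq := by
    rw [h.eq]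
    refine submatrix_mul_mul_transpose_of_support_subset B C f _ fun i i' p q hpq => ?_
    refine ⟨mem_factorSupport.2 ⟨i, i', q, hpq⟩, mem_factorSupport.2 ⟨i', i, p, ?_⟩⟩
    convert hpq using 1
    rw [h.isSymm.apply p q]
    ring

/-- If `p` lay in both supports, the summand `B (f i') q * C q p * B (g j) p` of the vanishing
entry `A (f i') (g j)` would be a product of nonzero numbers. -/
theorem disjoint_factorSupport (h : IsSNTFactorization A B C) {f : ν → μ} {g : ν' → μ}
    (hfg : ∀ i j, A (f i) (g j) = 0) : Disjoint (factorSupport B C f) (factorSupport B C g) := by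
  refine Finset.disjoint_left.2 fun p hpf hpg => ?_
  obtain ⟨i, i', q, hf⟩ := mem_factorSupport.1 hpf
  obtain ⟨j, j', r, hg⟩ := mem_factorSupport.1 hpg
  have hCqp : C q p ≠ 0 := by
    rw [h.isSymm.apply p q]
    exact right_ne_zero_of_mul (left_ne_zero_of_mul hf)
  exact mul_ne_zero (mul_ne_zero (right_ne_zero_of_mul hf) hCqp)
    (left_ne_zero_of_mul (left_ne_zero_of_mul hg))
    (h.mul_mul_eq_zero_of_apply_eq_zero (hfg i' j) q p)

theorem sntRank_submatrix_add_le_card [Fintype ν] [Fintype ν'] (h : IsSNTFactorization A B C)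
    {f : ν → μ} {g : ν' → μ} (hfg : ∀ i j, A (f i) (g j) = 0) :
    sntRank (A.submatrix f f) + sntRank (A.submatrix g g) ≤ Fintype.card ι := by
  classical
  calc sntRank (A.submatrix f f) + sntRank (A.submatrix g g)
      ≤ (factorSupport B C f).card + (factorSupport B C g).card := by
        simpa only [Fintype.card_coe] using add_le_add (h.submatrix_factorSupport f).sntRank_le_card
          (h.submatrix_factorSupport g).sntRank_le_card
    _ = (factorSupport B C f ∪ factorSupport B C g).card :=
        (Finset.card_union_of_disjoint (h.disjoint_factorSupport hfg)).symm
    _ ≤ Fintype.card ι := Finset.card_le_univ _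

end IsSNTFactorization

end factorSupport

theorem sntRank_fromBlocks_le {n m : Type*} [Fintype n] [Fintype m] [DecidableEq n]
    [DecidableEq m] {A' : Matrix n n ℝ} {A'' : Matrix m m ℝ} (hA' : A'.IsSymm)
    (hA'_nonneg : ∀ i j, 0 ≤ A' i j) (hA'' : A''.IsSymm) (hA''_nonneg : ∀ i j, 0 ≤ A'' i j) :
    sntRank (fromBlocks A' 0 0 A'') ≤ sntRank A' + sntRank A'' := by
  obtain ⟨B', C', h'⟩ := exists_isSNTFactorization_sntRank hA' hA'_nonneg
  obtain ⟨B'', C'', h''⟩ := exists_isSNTFactorization_sntRank hA'' hA''_nonneg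
  simpa using (h'.fromBlocks h'').sntRank_le_card

theorem le_sntRank_fromBlocks {n m : Type*} [Fintype n] [Fintype m] [DecidableEq n]
    [DecidableEq m] {A' : Matrix n n ℝ} {A'' : Matrix m m ℝ} (hA' : A'.IsSymm)
    (hA'_nonneg : ∀ i j, 0 ≤ A' i j) (hA'' : A''.IsSymm) (hA''_nonneg : ∀ i j, 0 ≤ A'' i j) :
    sntRank A' + sntRank A'' ≤ sntRank (fromBlocks A' 0 0 A'') := by
  obtain ⟨B, C, h⟩ := exists_isSNTFactorization_sntRank (A := fromBlocks A' 0 0 A'')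
    (hA'.fromBlocks transpose_zero hA'')
    (by rintro (i | i) (j | j) <;> simp [hA'_nonneg, hA''_nonneg])
  exact (h.sntRank_submatrix_add_le_card (f := Sum.inl) (g := Sum.inr) fun _ _ => rfl).trans_eq
    (Fintype.card_fin _)

theorem stmt_7 {n m : ℕ} (A' : Matrix (Fin n) (Fin n) ℝ) (A'' : Matrix (Fin m) (Fin m) ℝ)
    (hA' : A'.IsSymm) (hA'pos : ∀ i j, 0 ≤ A' i j)
    (hA'' : A''.IsSymm) (hA''pos : ∀ i j, 0 ≤ A'' i j) :
    sntRank (Matrix.fromBlocks A' 0 0 A'') = sntRank A' + sntRank A'' :=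
  (sntRank_fromBlocks_le hA' hA'pos hA'' hA''pos).antisymm
    (le_sntRank_fromBlocks hA' hA'pos hA'' hA''pos)
end

section
/- Let A be a symmetric nonnegative n×n matrix and M ∈ ℝ₊^{n×n} satisfy A = M + Mᵀ. Then st₊(A) ≤ 2·rk₊(M). -/
open Matrix

noncomputable def nnRank {m n : Type*} [Fintype m] [Fintype n] (A : Matrix m n ℝ) : ℕ :=
  sInf {k : ℕ | ∃ U : Matrix m (Fin k) ℝ, ∃ V : Matrix n (Fin k) ℝ,
    (∀ i j, 0 ≤ U i j) ∧ (∀ i j, 0 ≤ V i j) ∧ A = U * Vᵀ}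

/-! If `M = U Vᵀ` with `U, V ≥ 0` of inner dimension `k`, then with `B = [U | V]` and the block swap
`C = [[0, I], [I, 0]]` (nonnegative and symmetric) one gets `B C Bᵀ = U Vᵀ + V Uᵀ = M + Mᵀ`,
a symmetric nonnegative factorization of inner dimension `2k`. -/

namespace Matrix

variable {m n ι : Type*}

theorem isSymm_fromBlocks_zero_one_one_zero {R : Type*} [Semiring R] [DecidableEq ι] :
    (fromBlocks 0 1 1 0 : Matrix (ι ⊕ ι) (ι ⊕ ι) R).IsSymm := by
  simp [IsSymm, fromBlocks_transpose]

theorem fromBlocks_zero_one_one_zero_nonneg [DecidableEq ι] (i j : ι ⊕ ι) :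
    0 ≤ (fromBlocks 0 1 1 0 : Matrix (ι ⊕ ι) (ι ⊕ ι) ℝ) i j := by
  rcases i with i | i <;> rcases j with j | j <;>
    simp only [fromBlocks_apply₁₁, fromBlocks_apply₁₂, fromBlocks_apply₂₁, fromBlocks_apply₂₂,
      zero_apply, one_apply] <;>
    positivity

variable [Fintype ι]

theorem exists_fin_nonneg_factorization {A : Matrix m n ℝ} (U : Matrix m ι ℝ) (V : Matrix n ι ℝ)
    (hU : ∀ i j, 0 ≤ U i j) (hV : ∀ i j, 0 ≤ V i j) (h : A = U * Vᵀ) :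
    ∃ U' : Matrix m (Fin (Fintype.card ι)) ℝ, ∃ V' : Matrix n (Fin (Fintype.card ι)) ℝ,
      (∀ i j, 0 ≤ U' i j) ∧ (∀ i j, 0 ≤ V' i j) ∧ A = U' * V'ᵀ := by
  let e := (Fintype.equivFin ι).symm
  refine ⟨U.submatrix id e, V.submatrix id e, fun i j => hU _ _, fun i j => hV _ _, ?_⟩
  rw [transpose_submatrix, submatrix_mul_equiv, submatrix_id_id, h]

theorem exists_nonneg_factorization_nnRank [Fintype m] [Fintype n] {A : Matrix m n ℝ}
    (hA : ∀ i j, 0 ≤ A i j) :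
    ∃ U : Matrix m (Fin (nnRank A)) ℝ, ∃ V : Matrix n (Fin (nnRank A)) ℝ,
      (∀ i j, 0 ≤ U i j) ∧ (∀ i j, 0 ≤ V i j) ∧ A = U * Vᵀ := by
  classical
  have hOne : ∀ i j, 0 ≤ (1 : Matrix n n ℝ) i j := fun i j => by
    rw [one_apply]
    split_ifs <;> norm_num
  exact Nat.sInf_mem (s := {k | ∃ U : Matrix m (Fin k) ℝ, ∃ V : Matrix n (Fin k) ℝ,
      (∀ i j, 0 ≤ U i j) ∧ (∀ i j, 0 ≤ V i j) ∧ A = U * Vᵀ})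
    ⟨_, exists_fin_nonneg_factorization A 1 hA hOne (by rw [transpose_one, Matrix.mul_one])⟩

theorem sntRank_le_card [Fintype m] {A : Matrix m m ℝ} (B : Matrix m ι ℝ) (C : Matrix ι ι ℝ)
    (hB : ∀ i j, 0 ≤ B i j) (hC : ∀ i j, 0 ≤ C i j) (hCs : C.IsSymm) (h : A = B * C * Bᵀ) :
    sntRank A ≤ Fintype.card ι := by
  let e := (Fintype.equivFin ι).symm
  refine Nat.sInf_le ⟨B.submatrix id e, C.submatrix e e, fun i j => hB _ _, fun i j => hC _ _,
    ?_, ?_⟩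
  · rw [IsSymm, transpose_submatrix, hCs.eq]
  · rw [transpose_submatrix, submatrix_mul_equiv, submatrix_mul_equiv, submatrix_id_id, h]

theorem add_transpose_eq_fromCols_mul_fromBlocks {R : Type*} [CommSemiring R] [DecidableEq ι]
    {M : Matrix m m R} (U V : Matrix m ι R) (h : M = U * Vᵀ) :
    M + Mᵀ =
      fromCols U V * (fromBlocks 0 1 1 0 : Matrix (ι ⊕ ι) (ι ⊕ ι) R) * (fromCols U V)ᵀ := by
  rw [fromCols_mul_fromBlocks, transpose_fromCols, fromCols_mul_fromRows, h, transpose_mul,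
    transpose_transpose]
  simp only [Matrix.mul_zero, Matrix.mul_one, add_zero, add_comm]

end Matrix

theorem stmt_8_general {n : ℕ} (A M : Matrix (Fin n) (Fin n) ℝ)
    (hM : ∀ i j, 0 ≤ M i j) (hAM : A = M + Mᵀ) :
    sntRank A ≤ 2 * nnRank M := by
  obtain ⟨U, V, hU, hV, hUV⟩ := exists_nonneg_factorization_nnRank hM
  have hB : ∀ i j, 0 ≤ fromCols U V i j := by
    rintro i (j | j)
    exacts [hU i j, hV i j]
  have hA := hAM.trans (add_transpose_eq_fromCols_mul_fromBlocks U V hUV)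
  have h := sntRank_le_card _ _ hB fromBlocks_zero_one_one_zero_nonneg
    isSymm_fromBlocks_zero_one_one_zero hA
  simpa only [Fintype.card_sum, Fintype.card_fin, two_mul] using h

theorem stmt_8 {n : ℕ} (A M : Matrix (Fin n) (Fin n) ℝ)
    (hA : A.IsSymm) (hApos : ∀ i j, 0 ≤ A i j)
    (hM : ∀ i j, 0 ≤ M i j) (hAM : A = M + Mᵀ) :
    sntRank A ≤ 2 * nnRank M :=
  stmt_8_general A M hM hAM
end

section
/- Let A be a symmetric nonnegative n×n matrix and P a permutation matrix such that PᵀAP = [[A₁₁],[A₂₁]]·[I_k, Q] for some nonnegative matrix Q ∈ ℝ₊^{k×(n−k)}. Then st₊(A) ≤ k. -/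
open Matrix

/-! Since `sntRank` is invariant under simultaneous permutations of rows and columns, it suffices
to bound it for `M = [A₁₁; A₂₁] [I, Q]`. This matrix is symmetric, and comparing its off-diagonal
blocks gives `A₂₁ = Qᵀ A₁₁`, so `M = [I; Qᵀ] A₁₁ [I; Qᵀ]ᵀ`. This is a nonnegative symmetric
factorization with inner dimension `k`, because `A₁₁` is a principal block of the nonnegative
matrix `M`. -/

section BlockFactorization

variable {m n α : Type*} [Fintype m] [DecidableEq m] [CommSemiring α]

theorem fromRows_one_mul_mul_transpose (A₁₁ : Matrix m m α) (Q : Matrix m n α) :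
    fromRows 1 Qᵀ * A₁₁ * (fromRows (1 : Matrix m m α) Qᵀ)ᵀ = fromRows A₁₁ (Qᵀ * A₁₁) * fromCols 1 Q := by
  rw [fromRows_mul, Matrix.one_mul, transpose_fromRows, transpose_one, transpose_transpose]

theorem isSymm_fromRows_mul_fromCols_one_iff {A₁₁ : Matrix m m α} {A₂₁ : Matrix n m α}
    {Q : Matrix m n α} :
    (fromRows A₁₁ A₂₁ * fromCols 1 Q).IsSymm ↔ A₁₁.IsSymm ∧ Qᵀ * A₁₁ = A₂₁ := by
  constructor
  · intro h
    simp only [fromRows_mul_fromCols, Matrix.mul_one, isSymm_fromBlocks_iff] at h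
    obtain ⟨h₁₁, h₁₂, -, -⟩ := h
    rw [transpose_mul, h₁₁.eq] at h₁₂
    exact ⟨h₁₁, h₁₂⟩
  · rintro ⟨h₁₁, rfl⟩
    rw [← fromRows_one_mul_mul_transpose]
    simp only [IsSymm, transpose_mul, transpose_transpose, h₁₁.eq, Matrix.mul_assoc]

end BlockFactorization

theorem transpose_one_submatrix_mul_mul {n α : Type*} [Fintype n] [DecidableEq n]
    [NonAssocSemiring α] (σ : Equiv.Perm n) (A : Matrix n n α) :
    ((1 : Matrix n n α).submatrix id σ)ᵀ * A * (1 : Matrix n n α).submatrix id σ =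
      A.submatrix σ σ := by
  rw [transpose_submatrix, transpose_one, ← Equiv.coe_refl, one_submatrix_mul, mul_submatrix_one]
  simp

theorem submatrix_mul_mul_transpose {l m n α : Type*} [Fintype n] [CommSemiring α]
    (B : Matrix m n α) (C : Matrix n n α) (f : l → m) :
    (B * C * Bᵀ).submatrix f f = B.submatrix f id * C * (B.submatrix f id)ᵀ := by
  rw [submatrix_mul _ _ _ id _ Function.bijective_id, submatrix_mul _ _ _ id _
    Function.bijective_id, transpose_submatrix, submatrix_id_id]

theorem sntRank_submatrix_equiv {m m' : Type*} [Fintype m] [Fintype m'] (A : Matrix m m ℝ)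
    (e : m' ≃ m) : sntRank (A.submatrix e e) = sntRank A := by
  unfold sntRank
  congr 1
  ext k
  constructor
  · rintro ⟨B, C, hB, hC, hCs, hA⟩
    refine ⟨B.submatrix e.symm id, C, fun i j => hB _ j, hC, hCs, ?_⟩
    rw [← submatrix_mul_mul_transpose, ← hA, submatrix_submatrix, e.self_comp_symm,
      submatrix_id_id]
  · rintro ⟨B, C, hB, hC, hCs, hA⟩
    exact ⟨B.submatrix e id, C, fun i j => hB _ j, hC, hCs,
      hA ▸ submatrix_mul_mul_transpose B C e⟩

theorem sntRank_mul_mul_transpose_le {m : Type*} [Fintype m] {k : ℕ} {B : Matrix m (Fin k) ℝ}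
    {C : Matrix (Fin k) (Fin k) ℝ} (hB : ∀ i j, 0 ≤ B i j) (hC : ∀ i j, 0 ≤ C i j)
    (hCs : C.IsSymm) : sntRank (B * C * Bᵀ) ≤ k :=
  Nat.sInf_le ⟨B, C, hB, hC, hCs, rfl⟩

theorem stmt_11 {k l : ℕ} (A : Matrix (Fin (k + l)) (Fin (k + l)) ℝ)
    (hA : A.IsSymm) (hApos : ∀ i j, 0 ≤ A i j)
    (P : Matrix (Fin (k + l)) (Fin (k + l)) ℝ)
    (hP : ∃ σ : Equiv.Perm (Fin (k + l)), ∀ i j, P i j = if σ j = i then 1 else 0)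
    (A₁₁ : Matrix (Fin k) (Fin k) ℝ) (A₂₁ : Matrix (Fin l) (Fin k) ℝ)
    (Q : Matrix (Fin k) (Fin l) ℝ) (hQ : ∀ i j, 0 ≤ Q i j)
    (hfact : (Pᵀ * A * P).submatrix finSumFinEquiv finSumFinEquiv =
      Matrix.fromRows A₁₁ A₂₁ * Matrix.fromCols (1 : Matrix (Fin k) (Fin k) ℝ) Q) :
    sntRank A ≤ k := by
  obtain ⟨σ, hσ⟩ := hP
  have hPσ : P = (1 : Matrix _ _ ℝ).submatrix id σ := by
    ext i j
    simp [hσ, one_apply, eq_comm]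
  set τ := finSumFinEquiv.trans σ
  have hM : A.submatrix τ τ = fromRows A₁₁ A₂₁ * fromCols 1 Q := by
    rw [← hfact, hPσ, transpose_one_submatrix_mul_mul, submatrix_submatrix]
    rfl
  obtain ⟨hA₁₁s, rfl⟩ := isSymm_fromRows_mul_fromCols_one_iff.mp (hM ▸ hA.submatrix τ)
  have hA₁₁ : ∀ i j, 0 ≤ A₁₁ i j := fun i j => by
    have h := congrFun₂ hM (.inl i) (.inl j)
    simp only [submatrix_apply, fromRows_mul_fromCols, fromBlocks_apply₁₁, Matrix.mul_one] at h
    exact h ▸ hApos _ _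
  have hF : ∀ i j, 0 ≤ fromRows (1 : Matrix (Fin k) (Fin k) ℝ) Qᵀ i j := by
    rintro (i | i) j
    · simp [one_apply, apply_ite]
    · exact hQ j i
  rw [← sntRank_submatrix_equiv A τ, hM, ← fromRows_one_mul_mul_transpose]
  exact sntRank_mul_mul_transpose_le hF hA₁₁ hA₁₁s
end

section
/- Every symmetric nonnegative matrix A of rank 2 has SNT-rank equal to 2. -/
/-!
A nonnegative matrix `A` of rank 2 is separable. Two of its columns span its column space, so
`A = U * V` where the two columns of `U` are nonnegative. The rows of `U` are points of the closed
quadrant; sorting them by the slope `y / (x + y)` shows that they all lie in the cone spanned by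
two of them, rows `a` and `b`. Hence every row of `A` is a nonnegative combination of rows `a` and
`b`: `A = H * A.submatrix ![a, b] id` with `H ≥ 0`. For symmetric `A`, transposing this gives
`A.submatrix ![a, b] id = A.submatrix ![a, b] ![a, b] * Hᵀ`, so that
`A = H * A.submatrix ![a, b] ![a, b] * Hᵀ`. Conversely, `B * C * Bᵀ` has rank at most the number of
columns of `B`.
-/

open Matrix

def HasSNTFactorization {m : Type*} [Fintype m] (A : Matrix m m ℝ) (k : ℕ) : Prop :=
  ∃ B : Matrix m (Fin k) ℝ, ∃ C : Matrix (Fin k) (Fin k) ℝ,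
    (∀ i j, 0 ≤ B i j) ∧ (∀ i j, 0 ≤ C i j) ∧ C.IsSymm ∧ A = B * C * Bᵀ

section SNTFactorization

variable {m : Type*} [Fintype m] {A : Matrix m m ℝ} {k : ℕ}

theorem sntRank_le (h : HasSNTFactorization A k) : sntRank A ≤ k :=
  Nat.sInf_le h

theorem HasSNTFactorization.rank_le (h : HasSNTFactorization A k) : A.rank ≤ k := by
  obtain ⟨B, C, -, -, -, rfl⟩ := h
  calc (B * C * Bᵀ).rank ≤ (B * C).rank := rank_mul_le_left _ _
    _ ≤ B.rank := rank_mul_le_left _ _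
    _ ≤ k := B.rank_le_card_width.trans_eq (Fintype.card_fin k)

theorem rank_le_sntRank (h : HasSNTFactorization A k) : A.rank ≤ sntRank A :=
  HasSNTFactorization.rank_le (Nat.sInf_mem (s := {k | HasSNTFactorization A k}) ⟨k, h⟩)

end SNTFactorization

theorem Matrix.exists_eq_submatrix_mul_of_rank_eq {K m n : Type*} [Field K] [Fintype m]
    [Fintype n] {r : ℕ} (A : Matrix m n K) (hr : A.rank = r) :
    ∃ (e : Fin r → n) (V : Matrix (Fin r) n K), A = A.submatrix id e * V := by
  obtain ⟨κ, c, -, hspan, hli⟩ := exists_linearIndependent' K A.col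
  have := hli.finite
  have := Fintype.ofFinite κ
  have hcard : Fintype.card κ = r := by
    rw [← hr, rank_eq_finrank_span_cols, ← hspan, finrank_span_eq_card hli]
  set σ := (Fintype.equivFinOfCardEq hcard).symm
  have hcol : ∀ j, ∃ v : Fin r → K, ∑ k, v k • A.col (c (σ k)) = A.col j := fun j => by
    rw [← Submodule.mem_span_range_iff_exists_fun,
      show Set.range (fun k => A.col (c (σ k))) = Set.range (A.col ∘ c) from
        σ.surjective.range_comp (A.col ∘ c), hspan]
    exact Submodule.subset_span ⟨j, rfl⟩
  choose v hv using hcol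
  refine ⟨c ∘ σ, of fun k j => v j k, ?_⟩
  ext i j
  simpa [mul_apply, Finset.sum_apply, mul_comm] using (congrFun (hv j) i).symm

theorem exists_pair_forall_nonneg_combination {𝕜 ι : Type*} [Field 𝕜] [LinearOrder 𝕜]
    [IsStrictOrderedRing 𝕜] [Fintype ι] [Nonempty ι] (x y : ι → 𝕜) (hx : 0 ≤ x) (hy : 0 ≤ y) :
    ∃ a b : ι, ∀ i, ∃ α β : 𝕜, 0 ≤ α ∧ 0 ≤ β ∧
      x i = α * x a + β * x b ∧ y i = α * y a + β * y b := by
  classical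
  set s := x + y
  have hzero : ∀ i, ¬0 < s i → x i = 0 ∧ y i = 0 := fun i hi =>
    (add_eq_zero_iff_of_nonneg (hx i) (hy i)).mp
      (le_antisymm (not_lt.mp hi) (add_nonneg (hx i) (hy i)))
  set S := Finset.univ.filter (fun i => 0 < s i)
  rcases S.eq_empty_or_nonempty with hS | hS
  · obtain ⟨i₀⟩ := ‹Nonempty ι›
    refine ⟨i₀, i₀, fun i => ⟨0, 0, le_rfl, le_rfl, ?_⟩⟩
    simp [hzero i (Finset.filter_eq_empty_iff.mp hS (Finset.mem_univ i))]
  set t := fun i => y i / s i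
  obtain ⟨a, ha, hmin⟩ := S.exists_min_image t hS
  obtain ⟨b, hb, hmax⟩ := S.exists_max_image t hS
  simp only [S, Finset.mem_filter, Finset.mem_univ, true_and] at ha hb hmin hmax
  refine ⟨a, b, fun i => ?_⟩
  by_cases hi : 0 < s i
  · obtain ⟨θ, η, hθ, hη, hθη, hti⟩ : t i ∈ segment 𝕜 (t a) (t b) := by
      rw [segment_eq_Icc ((hmin i hi).trans (hmax i hi))]
      exact ⟨hmin i hi, hmax i hi⟩
    have hy_i : y i = θ * s i / s a * y a + η * s i / s b * y b := by
      simp only [t, smul_eq_mul] at hti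
      field_simp at hti ⊢
      linear_combination -hti
    refine ⟨θ * s i / s a, η * s i / s b, by positivity, by positivity, ?_, hy_i⟩
    have hs_i : s i = θ * s i / s a * s a + η * s i / s b * s b := by
      field_simp
      linarith
    simp only [s, Pi.add_apply] at hs_i hy_i ⊢
    linear_combination hs_i - hy_i
  · refine ⟨0, 0, le_rfl, le_rfl, ?_⟩
    simp [hzero i hi]

theorem Matrix.exists_nonneg_mul_submatrix_of_eq_mul {𝕜 m n : Type*} [Field 𝕜] [LinearOrder 𝕜]
    [IsStrictOrderedRing 𝕜] [Fintype m] [Nonempty m] {A : Matrix m n 𝕜}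
    {U : Matrix m (Fin 2) 𝕜} {V : Matrix (Fin 2) n 𝕜} (hU : ∀ i k, 0 ≤ U i k) (hA : A = U * V) :
    ∃ (e : Fin 2 → m) (H : Matrix m (Fin 2) 𝕜), (∀ i k, 0 ≤ H i k) ∧ A = H * A.submatrix e id := by
  obtain ⟨a, b, hab⟩ := exists_pair_forall_nonneg_combination (U · 0) (U · 1)
    (fun i => hU i 0) (fun i => hU i 1)
  choose α β hα hβ hU₀ hU₁ using hab
  refine ⟨![a, b], of fun i => ![α i, β i], fun i k => by fin_cases k <;> simp [hα, hβ], ?_⟩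
  ext i j
  rw [hA]
  simp only [mul_apply, Fin.sum_univ_two, submatrix_apply, of_apply, id, cons_val_zero,
    cons_val_one, hU₀ i, hU₁ i]
  ring

theorem Matrix.IsSymm.eq_mul_submatrix_mul_transpose {α m k : Type*} [CommSemiring α]
    [Fintype m] [Fintype k] {A : Matrix m m α} (hA : A.IsSymm) {H : Matrix m k α} {e : k → m}
    (h : A = H * A.submatrix e id) : A = H * A.submatrix e e * Hᵀ := by
  have hT : A = A.submatrix id e * Hᵀ := by
    conv_lhs => rw [← hA, h, transpose_mul, transpose_submatrix, hA.eq]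
  have hrows : A.submatrix e id = A.submatrix e e * Hᵀ := by
    conv_lhs => rw [hT, submatrix_mul _ _ e id id Function.bijective_id, submatrix_submatrix]
    rfl
  rw [Matrix.mul_assoc, ← hrows, ← h]

theorem stmt_12 {n : ℕ} (A : Matrix (Fin n) (Fin n) ℝ)
    (hA : A.IsSymm) (hApos : ∀ i j, 0 ≤ A i j) (hrank : A.rank = 2) :
    sntRank A = 2 := by
  obtain ⟨e, V, hAV⟩ := A.exists_eq_submatrix_mul_of_rank_eq hrank
  have : Nonempty (Fin n) := ⟨e 0⟩
  obtain ⟨f, H, hH, hAH⟩ := exists_nonneg_mul_submatrix_of_eq_mul (fun i k => hApos i (e k)) hAV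
  have hfac : HasSNTFactorization A 2 :=
    ⟨H, A.submatrix f f, hH, fun k l => hApos (f k) (f l), hA.submatrix f,
      hA.eq_mul_submatrix_mul_transpose hAH⟩
  exact le_antisymm (sntRank_le hfac) (hrank ▸ rank_le_sntRank hfac)
end

section
/- Let n be even and M_n be the n×n matrix with entries (M_n)_{ij} = (i−j)². Then st₊(M_n) ≤ n/2 + 2. -/
open Matrix

noncomputable def myA (n : ℕ) (i : Fin n) : ℝ :=
  if (i : ℕ) < n / 2 then (n : ℝ) - 2 * i - 1 else 2 * i - n + 1

def myc (n : ℕ) (i : Fin n) : Fin (n / 2 + 2) :=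
  if (i : ℕ) < n / 2 then ⟨0, by omega⟩ else ⟨1, by omega⟩

def myd (n : ℕ) (h2 : 2 * (n / 2) = n) (i : Fin n) : Fin (n / 2 + 2) :=
  if h : (i : ℕ) < n / 2 then ⟨(i : ℕ) + 2, by omega⟩
  else ⟨n + 1 - (i : ℕ), by have := i.2; omega⟩

noncomputable def myB (n : ℕ) (h2 : 2 * (n / 2) = n) : Matrix (Fin n) (Fin (n / 2 + 2)) ℝ :=
  fun i k => myA n i * (if k = myc n i then 1 else 0) + (if k = myd n h2 i then 1 else 0)

noncomputable def myC (n : ℕ) : Matrix (Fin (n / 2 + 2)) (Fin (n / 2 + 2)) ℝ :=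
  fun k l =>
    if ((k : ℕ) = 0 ∧ (l : ℕ) = 1) ∨ ((k : ℕ) = 1 ∧ (l : ℕ) = 0) then 1
    else if 2 ≤ (k : ℕ) ∧ 2 ≤ (l : ℕ) then ((k : ℝ) - (l : ℝ)) ^ 2 else 0

theorem stmt_14 {n : ℕ} (hn : Even n)
    (M : Matrix (Fin n) (Fin n) ℝ)
    (hM : ∀ i j, M i j = ((i : ℝ) - (j : ℝ)) ^ 2) :
    sntRank M ≤ n / 2 + 2 := by
  have h2 : 2 * (n / 2) = n := by
    obtain ⟨r, hr⟩ := hn; omega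
  apply Nat.sInf_le
  refine ⟨myB n h2, myC n, ?_, ?_, ?_, ?_⟩
  · intro i j
    have hA : (0:ℝ) ≤ myA n i := by
      unfold myA
      have hi := i.2
      split_ifs with h
      · have h3 : 2 * (i : ℕ) + 1 ≤ n := by omega
        have h4 : ((2 * (i : ℕ) + 1 : ℕ) : ℝ) ≤ (n : ℝ) := Nat.cast_le.mpr h3
        push_cast at h4; linarith
      · have h3 : n ≤ 2 * (i : ℕ) := by omega
        have h4 : ((n : ℕ) : ℝ) ≤ ((2 * (i : ℕ) : ℕ) : ℝ) := Nat.cast_le.mpr h3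
        push_cast at h4; linarith
    unfold myB
    split_ifs <;> simp only [mul_one, mul_zero, add_zero, zero_add] <;>
      first | linarith | norm_num
  · intro i j
    unfold myC
    split_ifs <;> positivity
  · unfold Matrix.IsSymm
    ext k l
    simp only [transpose_apply, myC]
    split_ifs <;> first | rfl | omega | ring
  · ext i j
    have hBC : ∀ l, (myB n h2 * myC n) i l =
        myA n i * myC n (myc n i) l + myC n (myd n h2 i) l := by
      intro l
      simp only [Matrix.mul_apply, myB, add_mul, ite_mul, one_mul, zero_mul, mul_ite, mul_one,
        mul_zero, Finset.sum_add_distrib, Finset.sum_ite_eq, Finset.sum_ite_eq', Finset.mem_univ, if_true]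
    have key : (myB n h2 * myC n * (myB n h2)ᵀ) i j =
        myA n i * myA n j * myC n (myc n i) (myc n j)
        + myA n i * myC n (myc n i) (myd n h2 j)
        + myA n j * myC n (myd n h2 i) (myc n j)
        + myC n (myd n h2 i) (myd n h2 j) := by
      simp only [Matrix.mul_apply, transpose_apply, hBC, myB, add_mul, mul_add, ite_mul, one_mul,
        zero_mul, mul_ite, mul_one, mul_zero, Finset.sum_add_distrib, Finset.sum_ite_eq', Finset.sum_ite_eq,
        Finset.mem_univ, if_true]
      ring
    rw [hM, key]
    have hi := i.2
    have hj := j.2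
    unfold myA myc myd myC
    by_cases h : (i : ℕ) < n / 2 <;> by_cases h' : (j : ℕ) < n / 2 <;>
      simp only [h, h', if_true, if_false, dif_pos, dif_neg, not_false_iff]
    · -- both first half
      norm_num
      push_cast
      ring
    · -- i < m ≤ j
      have hc : ((n + 1 - (j : ℕ) : ℕ) : ℝ) = (n : ℝ) + 1 - (j : ℝ) := by
        push_cast [Nat.cast_sub (by omega : (j : ℕ) ≤ n + 1)]; ring
      have e1 : ¬ (n + 1 - (j : ℕ) = 1) := by omega
      have e2 : 2 ≤ n + 1 - (j : ℕ) := by omega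
      norm_num [hc, e1, e2]
      split_ifs <;> first | omega | (push_cast; ring) | tauto
    · have hc : ((n + 1 - (i : ℕ) : ℕ) : ℝ) = (n : ℝ) + 1 - (i : ℝ) := by
        push_cast [Nat.cast_sub (by omega : (i : ℕ) ≤ n + 1)]; ring
      have e1 : ¬ (n + 1 - (i : ℕ) = 1) := by omega
      have e2 : 2 ≤ n + 1 - (i : ℕ) := by omega
      norm_num [hc, e1, e2]
      split_ifs <;> first | omega | (push_cast; ring) | tauto
    · have hci : ((n + 1 - (i : ℕ) : ℕ) : ℝ) = (n : ℝ) + 1 - (i : ℝ) := by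
        push_cast [Nat.cast_sub (by omega : (i : ℕ) ≤ n + 1)]; ring
      have hcj : ((n + 1 - (j : ℕ) : ℕ) : ℝ) = (n : ℝ) + 1 - (j : ℝ) := by
        push_cast [Nat.cast_sub (by omega : (j : ℕ) ≤ n + 1)]; ring
      norm_num [hci, hcj]
      split_ifs <;> first | omega | (push_cast; ring) | tauto
end

section
/- Let A₁ be a symmetric nonnegative n×n matrix, A₀ a symmetric nonnegative m×m matrix, N ∈ ℝ₊^{n×m}, and A = [[A₁, A₁N],[NᵀA₁, A₀ + NᵀA₁N]]. Then rank(A) = rank(A₁) + rank(A₀) and st₊(A) ≤ st₊(A₁) + st₊(A₀). -/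
open Matrix

def subProdEquiv {R M M' : Type*} [Ring R] [AddCommGroup M] [AddCommGroup M'] [Module R M]
    [Module R M'] (p : Submodule R M) (q : Submodule R M') :
    (p.prod q) ≃ₗ[R] p × q where
  toFun x := (⟨x.1.1, x.2.1⟩, ⟨x.1.2, x.2.2⟩)
  invFun x := ⟨(x.1.1, x.2.1), ⟨x.1.2, x.2.2⟩⟩
  left_inv _ := rfl
  right_inv _ := rfl
  map_add' _ _ := rfl
  map_smul' _ _ := rfl

lemma range_prodMap' {R M₁ M₂ N₁ N₂ : Type*} [CommRing R]
    [AddCommGroup M₁] [AddCommGroup M₂] [AddCommGroup N₁] [AddCommGroup N₂]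
    [Module R M₁] [Module R M₂] [Module R N₁] [Module R N₂]
    (f : M₁ →ₗ[R] N₁) (g : M₂ →ₗ[R] N₂) :
    LinearMap.range (f.prodMap g) = (LinearMap.range f).prod (LinearMap.range g) := by
  ext ⟨x, y⟩
  simp only [LinearMap.mem_range, Submodule.mem_prod, LinearMap.prodMap_apply, Prod.mk.injEq]
  constructor
  · rintro ⟨⟨a, b⟩, h1, h2⟩; exact ⟨⟨a, h1⟩, ⟨b, h2⟩⟩
  · rintro ⟨⟨a, ha⟩, ⟨b, hb⟩⟩; exact ⟨(a, b), ha, hb⟩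

lemma rank_fromBlocks_diag {n m : ℕ} (A : Matrix (Fin n) (Fin n) ℝ) (D : Matrix (Fin m) (Fin m) ℝ) :
    (fromBlocks A 0 0 D).rank = A.rank + D.rank := by
  set e := LinearEquiv.sumArrowLequivProdArrow (Fin n) (Fin m) ℝ ℝ with he
  have key : (fromBlocks A 0 0 D).mulVecLin
      = e.symm.toLinearMap ∘ₗ (A.mulVecLin.prodMap D.mulVecLin) ∘ₗ e.toLinearMap := by
    apply LinearMap.ext; intro x
    simp [he, fromBlocks_mulVec, LinearEquiv.sumArrowLequivProdArrow,
      Equiv.sumArrowEquivProdArrow, Matrix.mulVecLin]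
  rw [Matrix.rank, key, LinearMap.range_comp, LinearMap.range_comp_of_range_eq_top _
    (LinearMap.range_eq_top.mpr e.surjective), LinearEquiv.finrank_map_eq,
    range_prodMap', (subProdEquiv _ _).finrank_eq, Module.finrank_prod]
  rfl

lemma one_entry_nonneg {k : ℕ} (i j : Fin k) : (0:ℝ) ≤ (1 : Matrix (Fin k) (Fin k) ℝ) i j := by
  rw [Matrix.one_apply]; split <;> norm_num

lemma sntRank_mem {k : ℕ} (M : Matrix (Fin k) (Fin k) ℝ) (hM : M.IsSymm)
    (hMpos : ∀ i j, 0 ≤ M i j) :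
    sntRank M ∈ {j : ℕ | ∃ B : Matrix (Fin k) (Fin j) ℝ, ∃ C : Matrix (Fin j) (Fin j) ℝ,
      (∀ i j, 0 ≤ B i j) ∧ (∀ i j, 0 ≤ C i j) ∧ C.IsSymm ∧ M = B * C * Bᵀ} :=
  Nat.sInf_mem ⟨k, 1, M, fun i j => one_entry_nonneg i j, hMpos, hM, by simp⟩

theorem stmt_17 {n m : ℕ} (A₁ : Matrix (Fin n) (Fin n) ℝ) (A₀ : Matrix (Fin m) (Fin m) ℝ)
    (N : Matrix (Fin n) (Fin m) ℝ)
    (hA₁ : A₁.IsSymm) (hA₁pos : ∀ i j, 0 ≤ A₁ i j)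
    (hA₀ : A₀.IsSymm) (hA₀pos : ∀ i j, 0 ≤ A₀ i j)
    (hN : ∀ i j, 0 ≤ N i j) :
    (Matrix.fromBlocks A₁ (A₁ * N) (Nᵀ * A₁) (A₀ + Nᵀ * A₁ * N)).rank
        = A₁.rank + A₀.rank ∧
    sntRank (Matrix.fromBlocks A₁ (A₁ * N) (Nᵀ * A₁) (A₀ + Nᵀ * A₁ * N))
        ≤ sntRank A₁ + sntRank A₀ := by
  constructor
  · have hP : fromBlocks A₁ (A₁*N) (Nᵀ*A₁) (A₀ + Nᵀ*A₁*N)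
        = (fromBlocks 1 0 Nᵀ 1) * (fromBlocks A₁ 0 0 A₀) * (fromBlocks 1 N 0 1) := by
      rw [fromBlocks_multiply, fromBlocks_multiply]
      simp [Matrix.mul_assoc, add_comm]
    rw [hP, rank_mul_eq_left_of_isUnit_det _ _ (by simp [Matrix.det_fromBlocks_zero₂₁]),
      rank_mul_eq_right_of_isUnit_det _ _ (by simp [Matrix.det_fromBlocks_zero₁₂]),
      rank_fromBlocks_diag]
  · obtain ⟨B₁, C₁, hB₁pos, hC₁pos, hC₁sym, hA₁eq⟩ := sntRank_mem A₁ hA₁ hA₁pos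
    obtain ⟨B₀, C₀, hB₀pos, hC₀pos, hC₀sym, hA₀eq⟩ := sntRank_mem A₀ hA₀ hA₀pos
    apply Nat.sInf_le
    refine ⟨(fromBlocks B₁ 0 (Nᵀ*B₁) B₀).submatrix id finSumFinEquiv.symm,
      (fromBlocks C₁ 0 0 C₀).submatrix finSumFinEquiv.symm finSumFinEquiv.symm, ?_, ?_, ?_, ?_⟩
    · intro i j
      have h : ∀ (i : Fin n ⊕ Fin m) (j : Fin (sntRank A₁) ⊕ Fin (sntRank A₀)),
          0 ≤ (fromBlocks B₁ 0 (Nᵀ*B₁) B₀) i j := by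
        rintro (i|i) (j|j) <;>
          simp only [fromBlocks_apply₁₁, fromBlocks_apply₁₂, fromBlocks_apply₂₁,
            fromBlocks_apply₂₂, Matrix.zero_apply, le_refl]
        · exact hB₁pos i j
        · simp only [Matrix.mul_apply, Matrix.transpose_apply]
          exact Finset.sum_nonneg fun l _ => mul_nonneg (hN l i) (hB₁pos l j)
        · exact hB₀pos i j
      exact h i (finSumFinEquiv.symm j)
    · intro i j
      have h : ∀ (i j : Fin (sntRank A₁) ⊕ Fin (sntRank A₀)), 0 ≤ (fromBlocks C₁ 0 0 C₀) i j := by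
        rintro (i|i) (j|j) <;>
          simp only [fromBlocks_apply₁₁, fromBlocks_apply₁₂, fromBlocks_apply₂₁,
            fromBlocks_apply₂₂, Matrix.zero_apply, le_refl]
        · exact hC₁pos i j
        · exact hC₀pos i j
      exact h _ _
    · unfold Matrix.IsSymm
      rw [transpose_submatrix, fromBlocks_transpose, hC₁sym, hC₀sym]
      simp
    · rw [transpose_submatrix, Matrix.submatrix_mul_equiv, Matrix.submatrix_mul_equiv,
        Matrix.submatrix_id_id, fromBlocks_transpose, transpose_mul, transpose_transpose,
        transpose_zero, fromBlocks_multiply, fromBlocks_multiply]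
      rw [fromBlocks_inj]
      refine ⟨by simpa using hA₁eq, by simp [hA₁eq, Matrix.mul_assoc],
        by simp [hA₁eq, Matrix.mul_assoc], ?_⟩
      simp [hA₁eq, hA₀eq, Matrix.mul_assoc, add_comm]
end

section
/- Let A₁ be a symmetric nonnegative n×n matrix, N ∈ ℝ₊^{n×m}, and A = [[A₁, A₁N],[NᵀA₁, NᵀA₁N]]. Then st₊(A) = st₊(A₁). -/
open Matrix

theorem stmt_18 {n m : ℕ} (A₁ : Matrix (Fin n) (Fin n) ℝ)
    (N : Matrix (Fin n) (Fin m) ℝ)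
    (hA₁ : A₁.IsSymm) (hA₁pos : ∀ i j, 0 ≤ A₁ i j)
    (hN : ∀ i j, 0 ≤ N i j) :
    sntRank (Matrix.fromBlocks A₁ (A₁ * N) (Nᵀ * A₁) (Nᵀ * A₁ * N)) = sntRank A₁ := by
  unfold sntRank
  congr 1
  ext k
  simp only [Set.mem_setOf_eq]
  constructor
  · rintro ⟨B, C, hB, hC, hCs, hEq⟩
    refine ⟨B.submatrix Sum.inl id, C, fun i j => hB _ _, hC, hCs, ?_⟩
    ext i j
    have := congrFun (congrFun hEq (Sum.inl i)) (Sum.inl j)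
    simp only [fromBlocks_apply₁₁] at this
    rw [this]
    simp [Matrix.mul_apply, Matrix.transpose_apply, Matrix.submatrix_apply]
  · rintro ⟨B, C, hB, hC, hCs, hEq⟩
    refine ⟨fromRows B (Nᵀ * B), C, ?_, hC, hCs, ?_⟩
    · rintro (i | i) j
      · exact hB i j
      · simp only [fromRows_apply_inr, Matrix.mul_apply, Matrix.transpose_apply]
        exact Finset.sum_nonneg fun l _ => mul_nonneg (hN _ _) (hB _ _)
    · rw [transpose_fromRows, fromRows_mul B (Nᵀ * B) C, fromRows_mul_fromCols]
      rw [hEq]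
      congr 1 <;> simp [Matrix.mul_assoc]
end

section
/- Let Â₁ = [[A₁, a],[aᵀ, α]] be a symmetric nonnegative (n+1)×(n+1) matrix and A₂ a symmetric nonnegative m×m matrix with rank 1 and Perron eigenvalue α with unit eigenvector u (so A₂ = α u uᵀ). Then the matrix A = [[A₁, a uᵀ],[u aᵀ, A₂]] satisfies st₊(A) = st₊(Â₁). -/
open Matrix

lemma mulmat_nonneg {ι κ ρ : Type*} [Fintype κ] (M : Matrix ι κ ℝ) (N : Matrix κ ρ ℝ)
    (hM : ∀ i j, 0 ≤ M i j) (hN : ∀ i j, 0 ≤ N i j) : ∀ i j, 0 ≤ (M * N) i j := by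
  intro i j
  rw [Matrix.mul_apply]
  exact Finset.sum_nonneg fun k _ => mul_nonneg (hM i k) (hN k j)

theorem stmt_19 {n m : ℕ} (A₁ : Matrix (Fin n) (Fin n) ℝ)
    (a : Fin n → ℝ) (α : ℝ) (u : Fin m → ℝ)
    (hA₁ : A₁.IsSymm) (hA₁pos : ∀ i j, 0 ≤ A₁ i j)
    (ha : ∀ i, 0 ≤ a i) (hα : 0 ≤ α)
    (hu : ∀ i, 0 ≤ u i) (hunit : u ⬝ᵥ u = 1)
    (hrank : (α • Matrix.vecMulVec u u).rank = 1) :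
    sntRank (Matrix.fromBlocks A₁ (Matrix.vecMulVec a u) (Matrix.vecMulVec u a)
        (α • Matrix.vecMulVec u u)) =
      sntRank (Matrix.fromBlocks A₁
        (Matrix.of fun i (_ : Fin 1) => a i)
        (Matrix.of fun (_ : Fin 1) j => a j)
        (Matrix.of fun (_ : Fin 1) (_ : Fin 1) => α)) := by
  have hu2 : ∑ j, u j * u j = 1 := by simpa [dotProduct] using hunit
  set U : Matrix (Fin m) (Fin 1) ℝ := Matrix.of (fun j _ => u j) with hU
  set Ahat : Matrix (Fin n ⊕ Fin 1) (Fin n ⊕ Fin 1) ℝ :=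
    Matrix.fromBlocks A₁ (Matrix.of fun i (_ : Fin 1) => a i)
      (Matrix.of fun (_ : Fin 1) j => a j) (Matrix.of fun (_ : Fin 1) (_ : Fin 1) => α) with hAhat
  set A : Matrix (Fin n ⊕ Fin m) (Fin n ⊕ Fin m) ℝ :=
    Matrix.fromBlocks A₁ (Matrix.vecMulVec a u) (Matrix.vecMulVec u a)
      (α • Matrix.vecMulVec u u) with hA
  set D₁ : Matrix (Fin n ⊕ Fin m) (Fin n ⊕ Fin 1) ℝ := Matrix.fromBlocks 1 0 0 U with hD₁
  set D₂ : Matrix (Fin n ⊕ Fin 1) (Fin n ⊕ Fin m) ℝ := Matrix.fromBlocks 1 0 0 Uᵀ with hD₂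
  have hD₁pos : ∀ i j, 0 ≤ D₁ i j := by
    rintro (i | i) (j | j) <;>
      simp [hD₁, hU, Matrix.one_apply, hu] <;> split_ifs <;> simp [hu]
  have hD₂pos : ∀ i j, 0 ≤ D₂ i j := by
    rintro (i | i) (j | j) <;>
      simp [hD₂, hU, Matrix.one_apply, hu] <;> split_ifs <;> simp [hu]
  have h1 : A = D₁ * Ahat * D₁ᵀ := by
    rw [hD₁, hA, hAhat, Matrix.fromBlocks_transpose, Matrix.fromBlocks_multiply,
      Matrix.fromBlocks_multiply]
    simp only [Matrix.mul_one, Matrix.one_mul, Matrix.mul_zero, Matrix.zero_mul,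
      add_zero, zero_add, Matrix.transpose_one, Matrix.transpose_zero]
    ext x y
    rcases x with i | i <;> rcases y with j | j
    · simp
    · simp [Matrix.mul_apply, Matrix.vecMulVec_apply, hU]
    · simp [Matrix.mul_apply, Matrix.vecMulVec_apply, hU]
    · simp [Matrix.mul_apply, Matrix.vecMulVec_apply, hU, Fin.sum_univ_one]
      ring
  have h2 : Ahat = D₂ * A * D₂ᵀ := by
    rw [hD₂, hA, hAhat, Matrix.fromBlocks_transpose, Matrix.fromBlocks_multiply,
      Matrix.fromBlocks_multiply]
    simp only [Matrix.mul_one, Matrix.one_mul, Matrix.mul_zero, Matrix.zero_mul,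
      add_zero, zero_add, Matrix.transpose_one, Matrix.transpose_zero,
      Matrix.transpose_transpose]
    ext x y
    rcases x with i | i <;> rcases y with j | j
    · simp
    · simp [Matrix.mul_apply, Matrix.vecMulVec_apply, hU, mul_assoc, ← Finset.mul_sum, hu2]
    · simp [Matrix.mul_apply, Matrix.vecMulVec_apply, hU, ← mul_assoc, ← Finset.sum_mul, hu2]
    · simp [Matrix.mul_apply, Matrix.vecMulVec_apply, hU, ← mul_assoc, ← Finset.sum_mul, hu2]
  have hsets : {k : ℕ | ∃ B : Matrix (Fin n ⊕ Fin m) (Fin k) ℝ,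
      ∃ C : Matrix (Fin k) (Fin k) ℝ, (∀ i j, 0 ≤ B i j) ∧ (∀ i j, 0 ≤ C i j) ∧ C.IsSymm ∧
      A = B * C * Bᵀ} = {k : ℕ | ∃ B : Matrix (Fin n ⊕ Fin 1) (Fin k) ℝ,
      ∃ C : Matrix (Fin k) (Fin k) ℝ, (∀ i j, 0 ≤ B i j) ∧ (∀ i j, 0 ≤ C i j) ∧ C.IsSymm ∧
      Ahat = B * C * Bᵀ} := by
    ext k
    constructor
    · rintro ⟨B, C, hB, hC, hCs, hEq⟩
      exact ⟨D₂ * B, C, mulmat_nonneg _ _ hD₂pos hB, hC, hCs, by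
        rw [h2, hEq, Matrix.transpose_mul]
        simp only [Matrix.mul_assoc]⟩
    · rintro ⟨B, C, hB, hC, hCs, hEq⟩
      exact ⟨D₁ * B, C, mulmat_nonneg _ _ hD₁pos hB, hC, hCs, by
        rw [h1, hEq, Matrix.transpose_mul]
        simp only [Matrix.mul_assoc]⟩
  unfold sntRank
  rw [hsets]
end
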